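/- Let m, n ≥ 1 be integers. For A ∈ Matrix (Fin m) (Fin n) ℂ let S(A) = {(X,Y) ∈ 𝔰𝔬(m) × 𝔲(n) : (X mapped entrywise into ℂ)·A = A·Y}, regarded as a real vector space. Then the minimum over all A of dim_ℝ S(A) equals (m−2n)(m−2n−1)/2 if m > 2n+1, equals (n−m)² if n > m, and equals 0 otherwise. (This is the infinitesimal version of: the identity component of a principal isotropy group of the action of SO(m)×U(n) on ℝᵐ ⊗_ℝ ℂⁿ, given by (g,u)·A = g A u*, is SO(m−2n) if m > 2n+1, is U(n−m) if n > m, and is trivial otherwise.) -/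

import Mathlib

/-!
For `(X, Y) ∈ S(A)`, taking conjugate transposes in `X A = A Y` gives `Aᴴ X = Y Aᴴ`, so `X`
commutes with `A Aᴴ`, hence (being real) with its entrywise real part.

Lower bound: if the columns of `B₁` are an orthonormal basis of the real left kernel
`{v ∈ ℝᵐ | vᵀ A = 0}` (of dimension `≥ m - 2n`) and those of `B₂` one of `ker A ⊆ ℂⁿ`
(of dimension `≥ n - m`), then `(B₁ S B₁ᵀ, B₂ T B₂ᴴ) ∈ S(A)` for all `S ∈ 𝔰𝔬`, `T ∈ 𝔲`.

Upper bound: for the matrix `A₀` with `A₀ j j = j + 1`, `A₀ (n + j) j = i (n + j + 1)` and all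
other entries `0`, `Re (A₀ A₀ᴴ)` is diagonal with entries `(k + 1)²` for `k < 2n` and `0` beyond.
So `X` is supported on the last `m - 2n` coordinates, whence `X A₀ = 0 = A₀ Y`, and then `Y` is
supported on the last `n - m` coordinates. As at most one of `m - 2n`, `n - m` is nonzero, the
claimed value is `C(m - 2n, 2) + (n - m)²` in all cases.
-/

open Matrix

/-- `S(A) = {(X,Y) ∈ 𝔰𝔬(m) × 𝔲(n) : X·A = A·Y}`, where the real skew-symmetric matrix `X`
is mapped entrywise into `ℂ`. -/
def stabSet3 {m n : ℕ} (A : Matrix (Fin m) (Fin n) ℂ) :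
    Set (Matrix (Fin m) (Fin m) ℝ × Matrix (Fin n) (Fin n) ℂ) :=
  {p | p.1ᵀ = -p.1 ∧ p.2ᴴ = -p.2 ∧ p.1.map (algebraMap ℝ ℂ) * A = A * p.2}

/-- `𝔰𝔬(ι)` for `𝕜 = ℝ` and `𝔲(ι)` for `𝕜 = ℂ`. -/
noncomputable abbrev skewMatrices (𝕜 ι : Type*) [RCLike 𝕜] [Fintype ι] :
    Submodule ℝ (Matrix ι ι 𝕜) :=
  skewAdjoint.submodule ℝ (Matrix ι ι 𝕜)

theorem mem_skewMatrices {𝕜 ι : Type*} [RCLike 𝕜] [Fintype ι] {M : Matrix ι ι 𝕜} :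
    M ∈ skewMatrices 𝕜 ι ↔ Mᴴ = -M :=
  skewAdjoint.mem_iff

theorem finrank_real_skewAdjoint (A : Type*) [AddCommGroup A] [Module ℂ A] [StarAddMonoid A]
    [StarModule ℂ A] [FiniteDimensional ℂ A] :
    Module.finrank ℝ (skewAdjoint.submodule ℝ A) = Module.finrank ℂ A := by
  have : Module.Finite ℝ (skewAdjoint A) :=
    inferInstanceAs (Module.Finite ℝ (skewAdjoint.submodule ℝ A))
  have : Module.Finite ℝ (selfAdjoint A) :=
    inferInstanceAs (Module.Finite ℝ (selfAdjoint.submodule ℝ A))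
  have hI : Function.Bijective (skewAdjoint.negISMul (A := A)) := by
    refine ⟨fun a b h => Subtype.ext ?_, fun s => ⟨⟨Complex.I • (s : A), by simp⟩, ?_⟩⟩
    · rw [← skewAdjoint.I_smul_neg_I a, ← skewAdjoint.I_smul_neg_I b, h]
    · ext; simp [smul_smul]
  have hsplit := (StarModule.decomposeProdAdjoint ℝ A).finrank_eq
  rw [Module.finrank_prod, (LinearEquiv.ofBijective _ hI).finrank_eq.symm,
    finrank_real_of_complex] at hsplit
  change Module.finrank ℝ (skewAdjoint A) = _
  omega

theorem finrank_skewMatrices_complex (ι : Type*) [Fintype ι] :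
    Module.finrank ℝ (skewMatrices ℂ ι) = Fintype.card ι ^ 2 := by
  rw [finrank_real_skewAdjoint, Module.finrank_matrix, Module.finrank_self, mul_one, sq]

theorem finrank_skewMatrices_real (ι : Type*) [Fintype ι] [LinearOrder ι] :
    Module.finrank ℝ (skewMatrices ℝ ι) = (Fintype.card ι).choose 2 := by
  classical
  let upper : skewMatrices ℝ ι →ₗ[ℝ] ({p : ι × ι // p.1 < p.2} → ℝ) :=
    { toFun M p := (M : Matrix ι ι ℝ) p.1.1 p.1.2
      map_add' _ _ := rfl
      map_smul' _ _ := rfl }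
  have hinj : Function.Injective upper := by
    rw [← LinearMap.ker_eq_bot, LinearMap.ker_eq_bot']
    rintro ⟨M, hM⟩ h
    rw [mem_skewMatrices, conjTranspose_eq_transpose_of_trivial] at hM
    have hskew (i j) : M j i = -M i j := by simpa using congrFun₂ hM i j
    have hupper (i j) (hij : i < j) : M i j = 0 := congrFun h ⟨(i, j), hij⟩
    ext i j
    change M i j = 0
    rcases lt_trichotomy i j with hij | rfl | hij
    · exact hupper i j hij
    · linarith [hskew i i]
    · rw [hskew j i, hupper j i hij, neg_zero]
  have hsurj : Function.Surjective upper := by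
    intro f
    let U : Matrix ι ι ℝ := of fun i j => if h : i < j then f ⟨(i, j), h⟩ else 0
    refine ⟨⟨U - Uᵀ, ?_⟩, funext fun p => ?_⟩
    · rw [mem_skewMatrices, conjTranspose_eq_transpose_of_trivial]
      simp [transpose_sub]
    · change (U - Uᵀ) p.1.1 p.1.2 = f p
      simp [U, p.2, not_lt_of_gt p.2]
  rw [(LinearEquiv.ofBijective upper ⟨hinj, hsurj⟩).finrank_eq,
    Module.finrank_fintype_fun_eq_card, Fintype.card_subtype, Fintype.card_product_filter_lt]

section SkewMaps

variable {𝕜 : Type*} [RCLike 𝕜] {ι κ : Type*} [Fintype ι] [Fintype κ]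

noncomputable def skewConj (B : Matrix ι κ 𝕜) : skewMatrices 𝕜 κ →ₗ[ℝ] skewMatrices 𝕜 ι where
  toFun S := ⟨B * (S : Matrix κ κ 𝕜) * Bᴴ, by
    rw [mem_skewMatrices, conjTranspose_mul, conjTranspose_mul, conjTranspose_conjTranspose,
      mem_skewMatrices.1 S.2, Matrix.neg_mul, Matrix.mul_neg, Matrix.mul_assoc]⟩
  map_add' S T := Subtype.ext <| by simp [Matrix.mul_add, Matrix.add_mul]
  map_smul' c S := Subtype.ext <| by simp

theorem skewConj_injective [DecidableEq κ] {B : Matrix ι κ 𝕜} (hB : Bᴴ * B = 1) :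
    Function.Injective (skewConj B) := by
  have hcancel (M : Matrix κ κ 𝕜) : Bᴴ * (B * M * Bᴴ) * B = M := by
    simp only [Matrix.mul_assoc]
    rw [hB, Matrix.mul_one, ← Matrix.mul_assoc, hB, Matrix.one_mul]
  intro S T h
  have h' : B * (S : Matrix κ κ 𝕜) * Bᴴ = B * (T : Matrix κ κ 𝕜) * Bᴴ := congrArg Subtype.val h
  exact Subtype.ext <| by rw [← hcancel S, h', hcancel]

def skewSubmatrix (e : ι → κ) : skewMatrices 𝕜 κ →ₗ[ℝ] skewMatrices 𝕜 ι where
  toFun S := ⟨S.1.submatrix e e, by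
    rw [mem_skewMatrices, conjTranspose_submatrix, mem_skewMatrices.1 S.2]; rfl⟩
  map_add' _ _ := rfl
  map_smul' _ _ := rfl

end SkewMaps

theorem exists_isometry_columns_mem_ker {𝕜 V ι : Type*} [RCLike 𝕜] [AddCommGroup V]
    [Module 𝕜 V] [FiniteDimensional 𝕜 V] [Fintype ι] (L : (ι → 𝕜) →ₗ[𝕜] V) :
    ∃ (e : ℕ) (B : Matrix ι (Fin e) 𝕜),
      Fintype.card ι - Module.finrank 𝕜 V ≤ e ∧ Bᴴ * B = 1 ∧ ∀ l, L (fun i => B i l) = 0 := by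
  let L' := L ∘ₗ (WithLp.linearEquiv 2 𝕜 (ι → 𝕜)).toLinearMap
  let b := stdOrthonormalBasis 𝕜 (LinearMap.ker L')
  refine ⟨_, of fun i l => (b l : EuclideanSpace 𝕜 ι) i, ?_, ?_, fun l => (b l).2⟩
  · have hrank := LinearMap.finrank_range_add_finrank_ker L'
    have hrange := Submodule.finrank_le (LinearMap.range L')
    rw [finrank_euclideanSpace] at hrank
    omega
  · ext k l
    have hkl := orthonormal_iff_ite.mp b.orthonormal k l
    rw [Submodule.coe_inner, EuclideanSpace.inner_eq_star_dotProduct] at hkl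
    rw [mul_apply, one_apply, ← hkl, dotProduct]
    simp [mul_comm]

theorem Matrix.apply_eq_zero_of_mul_diagonal_eq {R ι : Type*} [CommRing R] [NoZeroDivisors R]
    [Fintype ι] [DecidableEq ι] {X : Matrix ι ι R} {c : ι → R}
    (h : X * diagonal c = diagonal c * X) {i j : ι} (hc : c i ≠ c j) : X i j = 0 := by
  have hij := congrFun₂ h i j
  rw [mul_diagonal, diagonal_mul] at hij
  have : (c j - c i) * X i j = 0 := by linear_combination hij
  exact (mul_eq_zero.1 this).resolve_left (sub_ne_zero.2 hc.symm)

theorem Matrix.map_re_ofReal_mul {ι κ ν : Type*} [Fintype κ] (X : Matrix ι κ ℝ)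
    (H : Matrix κ ν ℂ) : (X.map (algebraMap ℝ ℂ) * H).map Complex.re = X * H.map Complex.re := by
  ext i j
  simp [mul_apply, Complex.re_sum]

theorem Matrix.map_re_mul_ofReal {ι κ ν : Type*} [Fintype κ] (H : Matrix ι κ ℂ)
    (X : Matrix κ ν ℝ) : (H * X.map (algebraMap ℝ ℂ)).map Complex.re = H.map Complex.re * X := by
  ext i j
  simp [mul_apply, Complex.re_sum]

def tailEmbedding (a p : ℕ) (k : Fin (p - a)) : Fin p := ⟨a + k, by omega⟩

theorem eq_zero_of_submatrix_tailEmbedding {R : Type*} [Zero R] {a p : ℕ}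
    {M : Matrix (Fin p) (Fin p) R} (hM : ∀ i j : Fin p, (i : ℕ) < a ∨ (j : ℕ) < a → M i j = 0)
    (h : M.submatrix (tailEmbedding a p) (tailEmbedding a p) = 0) : M = 0 := by
  ext i j
  by_cases hij : (i : ℕ) < a ∨ (j : ℕ) < a
  · exact hM i j hij
  rw [not_or, not_lt, not_lt] at hij
  have := congrFun₂ h ⟨i - a, by omega⟩ ⟨j - a, by omega⟩
  simpa [tailEmbedding, Nat.add_sub_cancel' hij.1, Nat.add_sub_cancel' hij.2] using this

def principalMatrix (m n : ℕ) : Matrix (Fin m) (Fin n) ℂ :=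
  of fun k j =>
    if (k : ℕ) = j then ((k : ℕ) + 1 : ℂ)
    else if (k : ℕ) = n + j then Complex.I * ((k : ℕ) + 1 : ℂ) else 0

section Stabilizer

variable {m n : ℕ}

def infinitesimalStabilizer (A : Matrix (Fin m) (Fin n) ℂ) :
    Submodule ℝ (Matrix (Fin m) (Fin m) ℝ × Matrix (Fin n) (Fin n) ℂ) where
  carrier := stabSet3 A
  zero_mem' := by simp [stabSet3]
  add_mem' := by
    rintro ⟨X, Y⟩ ⟨X', Y'⟩ ⟨hX, hY, h⟩ ⟨hX', hY', h'⟩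
    simp only [Complex.coe_algebraMap] at hX hY h hX' hY' h'
    refine ⟨?_, ?_, ?_⟩
    · simp [transpose_add, hX, hX', add_comm]
    · simp [conjTranspose_add, hY, hY', add_comm]
    · simp [Matrix.map_add, Matrix.add_mul, Matrix.mul_add, h, h']
  smul_mem' := by
    rintro c ⟨X, Y⟩ ⟨hX, hY, h⟩
    simp only [Complex.coe_algebraMap] at hX hY h
    refine ⟨?_, ?_, ?_⟩
    · simp [hX]
    · simp [hY]
    · have hmap : (c • X).map Complex.ofReal = (c : ℂ) • X.map Complex.ofReal := by ext; simp
      change (c • X).map _ * A = A * (c • Y)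
      rw [Complex.coe_algebraMap, hmap, Matrix.smul_mul, h, Matrix.mul_smul, Complex.coe_smul]

theorem mem_infinitesimalStabilizer {A : Matrix (Fin m) (Fin n) ℂ}
    {X : Matrix (Fin m) (Fin m) ℝ} {Y : Matrix (Fin n) (Fin n) ℂ} :
    (X, Y) ∈ infinitesimalStabilizer A ↔ X ∈ skewMatrices ℝ (Fin m) ∧
      Y ∈ skewMatrices ℂ (Fin n) ∧ X.map (algebraMap ℝ ℂ) * A = A * Y := by
  rw [mem_skewMatrices, mem_skewMatrices, conjTranspose_eq_transpose_of_trivial]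
  rfl

theorem choose_two_add_sq_le_finrank_of_isometries {A : Matrix (Fin m) (Fin n) ℂ} {e₁ e₂ : ℕ}
    {B₁ : Matrix (Fin m) (Fin e₁) ℝ} {B₂ : Matrix (Fin n) (Fin e₂) ℂ}
    (hB₁ : B₁ᴴ * B₁ = 1) (hB₂ : B₂ᴴ * B₂ = 1)
    (hA₁ : B₁ᵀ.map (algebraMap ℝ ℂ) * A = 0) (hA₂ : A * B₂ = 0) :
    e₁.choose 2 + e₂ ^ 2 ≤ Module.finrank ℝ (infinitesimalStabilizer A) := by
  let conj := ((skewMatrices ℝ _).subtype.prodMap (skewMatrices ℂ _).subtype) ∘ₗ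
    ((skewConj B₁).prodMap (skewConj B₂))
  have hconj (p) : conj p ∈ infinitesimalStabilizer A := by
    obtain ⟨⟨S, hS⟩, ⟨T, hT⟩⟩ := p
    refine mem_infinitesimalStabilizer.2
      ⟨(skewConj B₁ ⟨S, hS⟩).2, (skewConj B₂ ⟨T, hT⟩).2, ?_⟩
    change (B₁ * S * B₁ᴴ).map _ * A = A * (B₂ * T * B₂ᴴ)
    rw [conjTranspose_eq_transpose_of_trivial, Matrix.map_mul, Matrix.map_mul, Matrix.mul_assoc,
      hA₁, ← Matrix.mul_assoc, ← Matrix.mul_assoc, hA₂]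
    simp
  have hinj : Function.Injective (conj.codRestrict _ hconj) := by
    rw [← LinearMap.ker_eq_bot, LinearMap.ker_codRestrict, LinearMap.ker_eq_bot]
    exact (Subtype.val_injective.prodMap Subtype.val_injective).comp
      ((skewConj_injective hB₁).prodMap (skewConj_injective hB₂))
  calc e₁.choose 2 + e₂ ^ 2
      = Module.finrank ℝ (skewMatrices ℝ (Fin e₁) × skewMatrices ℂ (Fin e₂)) := by
        rw [Module.finrank_prod, finrank_skewMatrices_real, finrank_skewMatrices_complex,
          Fintype.card_fin, Fintype.card_fin]
    _ ≤ _ := LinearMap.finrank_le_finrank_of_injective hinj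

theorem choose_two_add_sq_le_finrank_infinitesimalStabilizer (A : Matrix (Fin m) (Fin n) ℂ) :
    (m - 2 * n).choose 2 + (n - m) ^ 2 ≤ Module.finrank ℝ (infinitesimalStabilizer A) := by
  let vecMulReal : (Fin m → ℝ) →ₗ[ℝ] (Fin n → ℂ) :=
    (A.vecMulLinear.restrictScalars ℝ) ∘ₗ (Complex.ofRealCLM.toLinearMap.compLeft (Fin m))
  obtain ⟨e₁, B₁, he₁, hB₁, hL₁⟩ := exists_isometry_columns_mem_ker vecMulReal
  obtain ⟨e₂, B₂, he₂, hB₂, hL₂⟩ := exists_isometry_columns_mem_ker A.mulVecLin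
  have hA₁ : B₁ᵀ.map (algebraMap ℝ ℂ) * A = 0 := by
    ext l j
    simpa [vecMulReal, mul_apply, vecMul, dotProduct] using congrFun (hL₁ l) j
  have hA₂ : A * B₂ = 0 := by
    ext i l
    simpa [mul_apply, mulVec, dotProduct] using congrFun (hL₂ l) i
  simp only [Fintype.card_fin, Module.finrank_fintype_fun_eq_card, Module.finrank_pi_fintype,
    Complex.finrank_real_complex, Finset.sum_const, Finset.card_univ, smul_eq_mul] at he₁ he₂
  calc (m - 2 * n).choose 2 + (n - m) ^ 2 ≤ e₁.choose 2 + e₂ ^ 2 := by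
        gcongr; omega
    _ ≤ _ := choose_two_add_sq_le_finrank_of_isometries hB₁ hB₂ hA₁ hA₂

theorem commute_re_mul_conjTranspose_of_mem_infinitesimalStabilizer
    {A : Matrix (Fin m) (Fin n) ℂ} {X : Matrix (Fin m) (Fin m) ℝ}
    {Y : Matrix (Fin n) (Fin n) ℂ} (h : (X, Y) ∈ infinitesimalStabilizer A) :
    X * (A * Aᴴ).map Complex.re = (A * Aᴴ).map Complex.re * X := by
  obtain ⟨hX, hY, hXY⟩ := mem_infinitesimalStabilizer.1 h
  have hXc : (X.map (algebraMap ℝ ℂ))ᴴ = -X.map (algebraMap ℝ ℂ) := by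
    rw [← conjTranspose_map (algebraMap ℝ ℂ) (fun _ => (Complex.conj_ofReal _).symm),
      mem_skewMatrices.1 hX]
    exact Matrix.map_neg _ (map_neg (algebraMap ℝ ℂ)) X
  have hYX : Aᴴ * X.map (algebraMap ℝ ℂ) = Y * Aᴴ := by
    have := congrArg conjTranspose hXY
    rwa [conjTranspose_mul, conjTranspose_mul, hXc, mem_skewMatrices.1 hY, Matrix.mul_neg,
      Matrix.neg_mul, neg_inj] at this
  have hcomm : X.map (algebraMap ℝ ℂ) * (A * Aᴴ) = A * Aᴴ * X.map (algebraMap ℝ ℂ) := by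
    rw [← Matrix.mul_assoc, hXY, Matrix.mul_assoc, ← hYX, Matrix.mul_assoc]
  rw [← map_re_ofReal_mul, hcomm, map_re_mul_ofReal]

theorem re_principalMatrix_mul_star (k l : Fin m) (j : Fin n) :
    (principalMatrix m n k j * star (principalMatrix m n l j)).re =
      if k = l ∧ ((k : ℕ) = j ∨ (k : ℕ) = n + j) then ((k : ℕ) + 1 : ℝ) ^ 2 else 0 := by
  simp only [principalMatrix, of_apply, Fin.ext_iff]
  split_ifs <;> first | omega | simp_all [sq]

theorem re_principalMatrix_mul_conjTranspose :
    (principalMatrix m n * (principalMatrix m n)ᴴ).map Complex.re =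
      diagonal fun k : Fin m => if (k : ℕ) < 2 * n then ((k : ℕ) + 1 : ℝ) ^ 2 else 0 := by
  ext k l
  simp only [map_apply, mul_apply, conjTranspose_apply, Complex.re_sum,
    re_principalMatrix_mul_star, diagonal_apply]
  obtain rfl | hkl := eq_or_ne k l
  swap
  · simp [hkl]
  simp only [true_and, if_true]
  split_ifs with hk
  · let j₀ : Fin n := ⟨if (k : ℕ) < n then k else k - n, by split_ifs <;> omega⟩
    rw [Finset.sum_eq_single j₀]
    · rw [if_pos]
      simp only [j₀]
      split_ifs <;> omega
    · intro j _ hj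
      rw [if_neg]
      simp only [ne_eq, Fin.ext_iff, j₀] at hj
      split_ifs at hj <;> omega
    · simp
  · exact Finset.sum_eq_zero fun j _ => if_neg (by omega)

theorem map_mul_principalMatrix_eq_zero {ι : Type*} {X : Matrix ι (Fin m) ℝ}
    (hX : ∀ i (k : Fin m), (k : ℕ) < 2 * n → X i k = 0) :
    X.map (algebraMap ℝ ℂ) * principalMatrix m n = 0 := by
  ext i l
  rw [mul_apply, Matrix.zero_apply]
  refine Finset.sum_eq_zero fun k _ => ?_
  by_cases hk : (k : ℕ) < 2 * n
  · simp [hX i k hk]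
  · have := l.2
    simp only [principalMatrix, of_apply, map_apply]
    rw [if_neg (by omega), if_neg (by omega), mul_zero]

theorem apply_eq_zero_of_principalMatrix_mul_eq_zero {ι : Type*} {Y : Matrix (Fin n) ι ℂ}
    (h : principalMatrix m n * Y = 0) (k : Fin n) (hk : (k : ℕ) < m) (l : ι) : Y k l = 0 := by
  have hkl := congrFun₂ h ⟨k, hk⟩ l
  rw [mul_apply, Finset.sum_eq_single k] at hkl
  · simp only [principalMatrix, of_apply, if_true, Matrix.zero_apply, mul_eq_zero] at hkl
    exact hkl.resolve_left (Nat.cast_add_one_ne_zero _)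
  · intro j _ hj
    have := k.2
    simp only [principalMatrix, of_apply]
    rw [if_neg (fun h => hj (Fin.ext h.symm)), if_neg (by omega), zero_mul]
  · simp

theorem support_of_mem_infinitesimalStabilizer_principalMatrix {X : Matrix (Fin m) (Fin m) ℝ}
    {Y : Matrix (Fin n) (Fin n) ℂ} (h : (X, Y) ∈ infinitesimalStabilizer (principalMatrix m n)) :
    (∀ i j : Fin m, (i : ℕ) < 2 * n ∨ (j : ℕ) < 2 * n → X i j = 0) ∧
      ∀ k l : Fin n, (k : ℕ) < m ∨ (l : ℕ) < m → Y k l = 0 := by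
  obtain ⟨hX, hY, hXY⟩ := mem_infinitesimalStabilizer.1 h
  have hcomm := commute_re_mul_conjTranspose_of_mem_infinitesimalStabilizer h
  rw [re_principalMatrix_mul_conjTranspose] at hcomm
  rw [mem_skewMatrices, conjTranspose_eq_transpose_of_trivial] at hX
  rw [mem_skewMatrices] at hY
  have hXzero (i j : Fin m) (hij : (i : ℕ) < 2 * n ∨ (j : ℕ) < 2 * n) : X i j = 0 := by
    obtain rfl | hne := eq_or_ne i j
    · have hii := congrFun₂ hX i i
      rw [transpose_apply, neg_apply] at hii
      linarith
    refine apply_eq_zero_of_mul_diagonal_eq hcomm ?_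
    have hval : (i : ℕ) ≠ j := Fin.val_ne_of_ne hne
    split_ifs with hi hj hj
    · intro hsq
      have := (sq_eq_sq₀ (by positivity) (by positivity)).1 hsq
      exact hval (by exact_mod_cast add_right_cancel this)
    · positivity
    · exact (by positivity : ((j : ℕ) + 1 : ℝ) ^ 2 ≠ 0).symm
    · omega
  have hYrow := apply_eq_zero_of_principalMatrix_mul_eq_zero
    (hXY.symm.trans (map_mul_principalMatrix_eq_zero fun i k hk => hXzero i k (.inr hk)))
  refine ⟨hXzero, fun k l hkl => ?_⟩
  rcases hkl with hk | hl
  · exact hYrow k hk l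
  · simpa [hYrow l hl k] using (congrFun₂ hY k l).symm

theorem finrank_infinitesimalStabilizer_principalMatrix_le :
    Module.finrank ℝ (infinitesimalStabilizer (principalMatrix m n)) ≤
      (m - 2 * n).choose 2 + (n - m) ^ 2 := by
  let S := infinitesimalStabilizer (principalMatrix m n)
  let toSkew : S →ₗ[ℝ] skewMatrices ℝ (Fin m) × skewMatrices ℂ (Fin n) :=
    ((LinearMap.fst _ _ _ ∘ₗ S.subtype).codRestrict _
        fun p => (mem_infinitesimalStabilizer.1 p.2).1).prod
      ((LinearMap.snd _ _ _ ∘ₗ S.subtype).codRestrict _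
        fun p => (mem_infinitesimalStabilizer.1 p.2).2.1)
  let corner := ((skewSubmatrix (tailEmbedding (2 * n) m)).prodMap
    (skewSubmatrix (tailEmbedding m n))) ∘ₗ toSkew
  have hinj : Function.Injective corner := by
    rw [← LinearMap.ker_eq_bot, LinearMap.ker_eq_bot']
    rintro ⟨⟨X, Y⟩, hXY⟩ h
    obtain ⟨hX, hY⟩ := support_of_mem_infinitesimalStabilizer_principalMatrix hXY
    obtain rfl := eq_zero_of_submatrix_tailEmbedding hX (congrArg (·.1.1) h)
    obtain rfl := eq_zero_of_submatrix_tailEmbedding hY (congrArg (·.2.1) h)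
    rfl
  calc Module.finrank ℝ S
      ≤ Module.finrank ℝ (skewMatrices ℝ (Fin (m - 2 * n)) × skewMatrices ℂ (Fin (n - m))) :=
        LinearMap.finrank_le_finrank_of_injective hinj
    _ = _ := by
        rw [Module.finrank_prod, finrank_skewMatrices_real, finrank_skewMatrices_complex,
          Fintype.card_fin, Fintype.card_fin]

end Stabilizer

theorem ite_eq_choose_two_add_sq (m n : ℕ) :
    (if 2 * n + 1 < m then (m - 2 * n) * (m - 2 * n - 1) / 2
      else if m < n then (n - m) ^ 2 else 0) = (m - 2 * n).choose 2 + (n - m) ^ 2 := by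
  rw [Nat.choose_two_right]
  split_ifs with h₁ h₂
  · simp [Nat.sub_eq_zero_of_le (by omega : n ≤ m)]
  · simp [Nat.sub_eq_zero_of_le (by omega : m ≤ 2 * n)]
  · obtain h | h : m - 2 * n = 0 ∨ m - 2 * n = 1 := by omega
    all_goals simp [h, Nat.sub_eq_zero_of_le (by omega : n ≤ m)]

theorem stmt3_general (m n : ℕ) :
    IsLeast {d : ℕ | ∃ A : Matrix (Fin m) (Fin n) ℂ,
        d = Module.finrank ℝ (Submodule.span ℝ (stabSet3 A))}
      (if 2 * n + 1 < m then (m - 2 * n) * (m - 2 * n - 1) / 2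
       else if m < n then (n - m) ^ 2 else 0) := by
  have hspan (A : Matrix (Fin m) (Fin n) ℂ) :
      Submodule.span ℝ (stabSet3 A) = infinitesimalStabilizer A :=
    Submodule.span_eq (infinitesimalStabilizer A)
  rw [ite_eq_choose_two_add_sq]
  refine ⟨⟨principalMatrix m n, ?_⟩, ?_⟩
  · rw [hspan]
    exact le_antisymm (choose_two_add_sq_le_finrank_infinitesimalStabilizer _)
      finrank_infinitesimalStabilizer_principalMatrix_le
  · rintro _ ⟨A, rfl⟩
    rw [hspan]
    exact choose_two_add_sq_le_finrank_infinitesimalStabilizer A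

theorem stmt3 (m n : ℕ) (hm : 1 ≤ m) (hn : 1 ≤ n) :
    IsLeast {d : ℕ | ∃ A : Matrix (Fin m) (Fin n) ℂ,
        d = Module.finrank ℝ (Submodule.span ℝ (stabSet3 A))}
      (if 2 * n + 1 < m then (m - 2 * n) * (m - 2 * n - 1) / 2
       else if m < n then (n - m) ^ 2 else 0) :=
  stmt3_general m n
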